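/- Let k be a number field, let P = (P₁, P₂) ∈ ℙ^1(k) × ℙ^1(k), and let a, b be positive integers. Then the approximation constant of P on ℙ^1(k) × ℙ^1(k) with respect to the height H_{a,b}(S,T) = H(S)^a · H(T)^b exists and equals min(a,b); moreover, a sequence of best approximation to P with respect to H_{a,b} can be chosen inside the fibre {P₁} × ℙ^1(k) when b ≤ a, and inside the fibre ℙ^1(k) × {P₂} when a ≤ b. (This is the paper's conjecture on rational approximations verified for the split minimal rational surface ℙ^1 × ℙ^1, on which the ample divisor classes are exactly the O(a,b) with a, b ≥ 1 and the fibres through P are rational curves.) -/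

import Mathlib

/-!
Two distinct points `S ≠ T` of `ℙ¹(k)` satisfy the Liouville inequality
`dist(S, T) ≥ (H(S) H(T))⁻¹`: the minor `s₀t₁ - s₁t₀` is a nonzero element of the product of the
coefficient ideals of `S` and `T`, so its norm is at least the product of their norms, and the
archimedean part of the product formula turns this into the inequality. For `Z ≠ P` in
`ℙ¹ × ℙ¹` some coordinate of `Z` differs from that of `P`, and since heights are at least `1` this
gives `dist(P, Z)^min(a,b) · H_{a,b}(Z) ≥ c_P > 0`, so no approximating sequence has a constant
below `min(a,b)`. Conversely, the points `[(n + 1) u + w]` approach `[u]` in `ℙ¹` at distance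
`≪ 1/n` with height `≪ n`; moving only the coordinate whose exponent is the smaller one attains
the constant `min(a,b)`.
-/

open NumberField Filter Topology

noncomputable section

variable (k : Type*) [Field k] [NumberField k]

/-- The absolute multiplicative Weil height of a coordinate vector over `k`. -/
def vecHeight {ι : Type*} [Fintype ι] (x : ι → k) : ℝ :=
  ((∏ v : InfinitePlace k, (⨆ j, v (x j)) ^ v.mult) /
      ((FractionalIdeal.absNorm (FractionalIdeal.spanFinset (𝓞 k) Finset.univ x) : ℚ) : ℝ)) ^
    ((Module.finrank ℚ k : ℝ)⁻¹)

/-- The absolute multiplicative Weil height on projective space. -/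
def projHeight {m : ℕ} (P : Projectivization k (Fin m → k)) : ℝ :=
  vecHeight k P.rep

/-- The archimedean distance between two points of projective space. -/
def projDist {m : ℕ} (P Q : Projectivization k (Fin m → k)) : ℝ :=
  ∑ v : InfinitePlace k,
    (⨆ p : Fin m × Fin m, v (P.rep p.1 * Q.rep p.2 - P.rep p.2 * Q.rep p.1)) /
      ((⨆ j, v (P.rep j)) * (⨆ j, v (Q.rep j)))

/-- `α` is the approximation constant of the sequence `Q` with respect to the
point `P`, the distance function `d` and the height function `h`. -/
def IsApproxConst {X : Type*} (d : X → X → ℝ) (h : X → ℝ) (P : X) (Q : ℕ → X) (α : ℝ) : Prop :=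
  IsLeast {a : ℝ | 0 ≤ a ∧ ∃ C : ℝ, ∀ i, d P (Q i) ^ a * h (Q i) ≤ C} α

/-- `Q` is a sequence of points distinct from `P` converging to `P`. -/
def ApproxSeq {X : Type*} (d : X → X → ℝ) (P : X) (Q : ℕ → X) : Prop :=
  (∀ i, Q i ≠ P) ∧ Tendsto (fun i => d P (Q i)) atTop (𝓝 0)

/-- `α` is the approximation constant of `P` on `S`. -/
def IsPointApproxConst {X : Type*} (d : X → X → ℝ) (h : X → ℝ) (S : Set X) (P : X) (α : ℝ) :
    Prop :=
  IsLeast {a : ℝ | ∃ Q : ℕ → X, (∀ i, Q i ∈ S) ∧ ApproxSeq d P Q ∧ IsApproxConst d h P Q a} α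

/-- `Q` is a sequence of best approximation to `P` on `S`. -/
def IsBestApproxSeq {X : Type*} (d : X → X → ℝ) (h : X → ℝ) (S : Set X) (P : X) (Q : ℕ → X) :
    Prop :=
  (∀ i, Q i ∈ S) ∧ ApproxSeq d P Q ∧
    ∃ α : ℝ, IsApproxConst d h P Q α ∧ IsPointApproxConst d h S P α

/-- The set of `k`-points of the line through two points of projective space. -/
def lineThrough {m : ℕ} (P Q : Projectivization k (Fin m → k)) :
    Set (Projectivization k (Fin m → k)) :=
  {R | R.rep ∈ Submodule.span k {P.rep, Q.rep}}

/-- The Plücker height of the line through two distinct points. -/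
def plueckerHeight {m : ℕ} (P Q : Projectivization k (Fin m → k)) : ℝ :=
  vecHeight k (fun p : Fin m × Fin m => P.rep p.1 * Q.rep p.2 - P.rep p.2 * Q.rep p.1)


/-- The distance on `ℙ¹(k) × ℙ¹(k)`. -/
def p1p1Dist (x y : Projectivization k (Fin 2 → k) × Projectivization k (Fin 2 → k)) : ℝ :=
  max (projDist k x.1 y.1) (projDist k x.2 y.2)

/-- The height `H_{a,b}(S,T) = H(S)^a · H(T)^b` on `ℙ¹(k) × ℙ¹(k)` attached to the
ample divisor class `O(a,b)`. -/
def p1p1Height (a b : ℕ)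
    (x : Projectivization k (Fin 2 → k) × Projectivization k (Fin 2 → k)) : ℝ :=
  projHeight k x.1 ^ a * projHeight k x.2 ^ b

variable {k}

open scoped nonZeroDivisors

section Places

variable {K : Type*} [Field K] {ι : Type*}

lemma iSup_place_nonneg (v : InfinitePlace K) (x : ι → K) : 0 ≤ ⨆ j, v (x j) :=
  Real.iSup_nonneg fun j => apply_nonneg v (x j)

lemma le_iSup_place [Finite ι] (v : InfinitePlace K) (x : ι → K) (j : ι) :
    v (x j) ≤ ⨆ j, v (x j) :=
  le_ciSup (f := fun j => v (x j)) (Set.finite_range _).bddAbove j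

lemma iSup_place_pos [Finite ι] (v : InfinitePlace K) {x : ι → K} (hx : x ≠ 0) :
    0 < ⨆ j, v (x j) := by
  obtain ⟨j, hj⟩ := Function.ne_iff.mp hx
  exact (InfinitePlace.pos_iff.mpr hj).trans_le (le_iSup_place v x j)

lemma iSup_place_smul (v : InfinitePlace K) (c : K) (x : ι → K) :
    ⨆ j, v ((c • x) j) = v c * ⨆ j, v (x j) := by
  simp only [Pi.smul_apply, smul_eq_mul, map_mul]
  exact (Real.mul_iSup_of_nonneg (apply_nonneg v c) _).symm

lemma NumberField.InfinitePlace.apply_natCast (v : InfinitePlace K) (n : ℕ) :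
    v (n : K) = n := by
  rw [← InfinitePlace.norm_embedding_eq, map_natCast, Complex.norm_natCast]

lemma iSup_place_minors_fin_two (v : InfinitePlace K) (x y : Fin 2 → K) :
    ⨆ p : Fin 2 × Fin 2, v (x p.1 * y p.2 - x p.2 * y p.1) = v (x 0 * y 1 - x 1 * y 0) := by
  refine le_antisymm (ciSup_le ?_) (le_ciSup (f := fun p : Fin 2 × Fin 2 =>
    v (x p.1 * y p.2 - x p.2 * y p.1)) (Set.finite_range _).bddAbove (0, 1))
  rintro ⟨i, j⟩
  fin_cases i <;> fin_cases j
  all_goals simp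
  rw [← neg_sub (x 0 * y 1)]
  exact (v.1.map_neg _).le

end Places

section PlaneVectors

variable {K : Type*} [Field K]

lemma Projectivization.exists_rep_mk_eq_smul {V : Type*} [AddCommGroup V] [Module K V] (y : V)
    (hy : y ≠ 0) : ∃ c : Kˣ, (Projectivization.mk K y hy).rep = c • y := by
  obtain ⟨c, hc⟩ := (Projectivization.mk_eq_mk_iff K _ y (Projectivization.rep_nonzero _) hy).mp
    (Projectivization.mk_rep _)
  exact ⟨c, hc.symm⟩

lemma exists_smul_eq_of_mul_eq_mul {x y : Fin 2 → K} (hx : x ≠ 0) (h : x 0 * y 1 = x 1 * y 0) :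
    ∃ c : K, c • x = y := by
  by_cases hx0 : x 0 = 0
  · have hx1 : x 1 ≠ 0 := fun h1 => hx (funext (Fin.forall_fin_two.2 ⟨hx0, h1⟩))
    refine ⟨y 1 / x 1, funext (Fin.forall_fin_two.2 ⟨?_, div_mul_cancel₀ _ hx1⟩)⟩
    simp only [Pi.smul_apply, smul_eq_mul, hx0, mul_zero]
    rw [hx0, zero_mul] at h
    exact ((mul_eq_zero.mp h.symm).resolve_left hx1).symm
  · refine ⟨y 0 / x 0, funext (Fin.forall_fin_two.2 ⟨div_mul_cancel₀ _ hx0, ?_⟩)⟩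
    simp only [Pi.smul_apply, smul_eq_mul]
    field_simp
    linear_combination -h

lemma mul_sub_mul_ne_zero_of_ne {S T : Projectivization K (Fin 2 → K)} (h : S ≠ T) :
    S.rep 0 * T.rep 1 - S.rep 1 * T.rep 0 ≠ 0 := by
  intro h0
  obtain ⟨c, hc⟩ := exists_smul_eq_of_mul_eq_mul (Projectivization.rep_nonzero T)
    (show T.rep 0 * S.rep 1 = T.rep 1 * S.rep 0 by linear_combination -h0)
  apply h
  rw [← Projectivization.mk_rep S, ← Projectivization.mk_rep T, Projectivization.mk_eq_mk_iff']
  exact ⟨c, hc⟩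

lemma exists_mul_sub_mul_ne_zero {u : Fin 2 → K} (hu : u ≠ 0) :
    ∃ (w : Fin 2 → K) (j : Fin 2), u j ≠ 0 ∧ w j = 0 ∧ u 0 * w 1 - u 1 * w 0 ≠ 0 := by
  by_cases h0 : u 0 = 0
  · have h1 : u 1 ≠ 0 := fun h1 => hu (funext (Fin.forall_fin_two.2 ⟨h0, h1⟩))
    exact ⟨![1, 0], 1, h1, rfl, by simpa using h1⟩
  · exact ⟨![0, 1], 0, h0, rfl, by simpa using h0⟩

lemma minor_natCast_smul_add (u w : Fin 2 → K) (n : ℕ) :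
    u 0 * ((n : K) • u + w) 1 - u 1 * ((n : K) • u + w) 0 = u 0 * w 1 - u 1 * w 0 := by
  simp only [Pi.add_apply, Pi.smul_apply, smul_eq_mul]
  ring

end PlaneVectors

section Ideals

open FractionalIdeal

lemma FractionalIdeal.absNorm_pos {I : FractionalIdeal (𝓞 k)⁰ k} (hI : I ≠ 0) :
    0 < absNorm I :=
  (absNorm_nonneg I).lt_of_ne' (absNorm_eq_zero_iff.not.mpr hI)

lemma FractionalIdeal.absNorm_le_absNorm_of_le {I J : FractionalIdeal (𝓞 k)⁰ k} (hIJ : I ≤ J)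
    (hI : I ≠ 0) : absNorm J ≤ absNorm I := by
  have hJ : J ≠ 0 := fun h => hI (le_antisymm (h ▸ hIJ) (zero_le I))
  -- `I = C * J` for the integral ideal `C = I * J⁻¹`, whose norm is a positive integer
  obtain ⟨C, hC⟩ := le_one_iff_exists_coeIdeal.mp
    (show I * J⁻¹ ≤ 1 from mul_inv_cancel₀ hJ ▸ mul_le_mul_left hIJ J⁻¹)
  have hIC : I = C * J := by rw [hC, mul_assoc, inv_mul_cancel₀ hJ, mul_one]
  have hC0 : C ≠ ⊥ := by rintro rfl; exact hI (by simp [hIC])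
  have hC1 : (1 : ℚ) ≤ absNorm (C : FractionalIdeal (𝓞 k)⁰ k) := by
    rw [coeIdeal_absNorm, Nat.one_le_cast, Nat.one_le_iff_ne_zero, ne_eq,
      Ideal.absNorm_eq_zero_iff]
    exact hC0
  rw [hIC, map_mul]
  exact le_mul_of_one_le_left (absNorm_nonneg J) hC1

lemma FractionalIdeal.absNorm_le_abs_norm_of_mem {I : FractionalIdeal (𝓞 k)⁰ k} {t : k}
    (ht : t ∈ I) (ht0 : t ≠ 0) : absNorm I ≤ |Algebra.norm ℚ t| := by
  rw [← absNorm_span_singleton (𝓞 k)]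
  exact absNorm_le_absNorm_of_le (spanSingleton_le_iff_mem.mpr ht)
    (by rwa [ne_eq, spanSingleton_eq_zero_iff])

variable {ι : Type*} [Fintype ι]

lemma mem_spanFinset_self (x : ι → k) (j : ι) : x j ∈ spanFinset (𝓞 k) Finset.univ x := by
  rw [← mem_coe, spanFinset_coe]
  exact Submodule.subset_span ⟨j, Finset.mem_univ j, rfl⟩

lemma spanFinset_ne_zero_of_ne_zero {x : ι → k} (hx : x ≠ 0) :
    spanFinset (𝓞 k) Finset.univ x ≠ 0 := by
  obtain ⟨j, hj⟩ := Function.ne_iff.mp hx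
  exact spanFinset_ne_zero.mpr ⟨j, Finset.mem_univ j, hj⟩

lemma spanFinset_smul (c : k) (x : ι → k) :
    spanFinset (𝓞 k) Finset.univ (c • x) =
      spanSingleton (𝓞 k)⁰ c * spanFinset (𝓞 k) Finset.univ x := by
  apply coeToSubmodule_injective
  simp only [coe_mul, coe_spanSingleton, spanFinset_coe, Submodule.span_singleton_mul,
    Pi.smul_def]
  rw [Submodule.smul_span, ← Set.image_smul, Set.image_image]

lemma spanFinset_natCast_smul_add_le (u w : ι → k) (n : ℕ) :
    spanFinset (𝓞 k) Finset.univ ((n : k) • u + w) ≤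
      spanFinset (𝓞 k) Finset.univ u ⊔ spanFinset (𝓞 k) Finset.univ w := by
  rw [← coe_le_coe, spanFinset_coe, Submodule.span_le]
  rintro - ⟨j, -, rfl⟩
  rw [SetLike.mem_coe, coe_sup]
  have hu := mem_coe.mpr (mem_spanFinset_self u j)
  have hw := mem_coe.mpr (mem_spanFinset_self w j)
  simpa only [Pi.add_apply, Pi.smul_apply, smul_eq_mul, ← nsmul_eq_mul] using
    add_mem (nsmul_mem (Submodule.mem_sup_left hu) n) (Submodule.mem_sup_right hw)

lemma absNorm_spanFinset_mul_le_abs_norm {x y : Fin 2 → k} (ht : x 0 * y 1 - x 1 * y 0 ≠ 0) :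
    (absNorm (spanFinset (𝓞 k) Finset.univ x) : ℝ) * absNorm (spanFinset (𝓞 k) Finset.univ y) ≤
      ((|Algebra.norm ℚ (x 0 * y 1 - x 1 * y 0)| : ℚ) : ℝ) := by
  have hmem : x 0 * y 1 - x 1 * y 0 ∈
      spanFinset (𝓞 k) Finset.univ x * spanFinset (𝓞 k) Finset.univ y :=
    mem_coe.mp <| Submodule.sub_mem _
      (mem_coe.mpr <| mul_mem_mul (mem_spanFinset_self x 0) (mem_spanFinset_self y 1))
      (mem_coe.mpr <| mul_mem_mul (mem_spanFinset_self x 1) (mem_spanFinset_self y 0))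
  exact_mod_cast map_mul absNorm (spanFinset (𝓞 k) Finset.univ x) _ ▸
    absNorm_le_abs_norm_of_mem hmem ht

end Ideals

variable (k) in
lemma finrank_rat_ne_zero : Module.finrank ℚ k ≠ 0 :=
  Module.finrank_pos.ne'

lemma prod_pow_mult_const (c : ℝ) :
    ∏ v : InfinitePlace k, c ^ v.mult = c ^ Module.finrank ℚ k := by
  rw [Finset.prod_pow_eq_pow_sum, InfinitePlace.sum_mult_eq]

lemma prod_pow_mult_le_sum_pow {f : InfinitePlace k → ℝ} (hf : ∀ v, 0 ≤ f v) :
    ∏ v, f v ^ v.mult ≤ (∑ v, f v) ^ Module.finrank ℚ k := by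
  rw [← prod_pow_mult_const]
  exact Finset.prod_le_prod (fun v _ => pow_nonneg (hf v) _) fun v _ =>
    pow_le_pow_left₀ (hf v) (Finset.single_le_sum (fun w _ => hf w) (Finset.mem_univ v)) _

section Height

variable {ι : Type*} [Fintype ι]

lemma prod_iSup_place_div_absNorm_nonneg (x : ι → k) :
    0 ≤ (∏ v : InfinitePlace k, (⨆ j, v (x j)) ^ v.mult) /
      (FractionalIdeal.absNorm (FractionalIdeal.spanFinset (𝓞 k) Finset.univ x) : ℝ) :=
  div_nonneg (Finset.prod_nonneg fun v _ => pow_nonneg (iSup_place_nonneg v x) _)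
    (Rat.cast_nonneg.mpr (FractionalIdeal.absNorm_nonneg _))

lemma vecHeight_nonneg (x : ι → k) : 0 ≤ vecHeight k x :=
  Real.rpow_nonneg (prod_iSup_place_div_absNorm_nonneg x) _

lemma vecHeight_pow_finrank (x : ι → k) :
    vecHeight k x ^ Module.finrank ℚ k =
      (∏ v : InfinitePlace k, (⨆ j, v (x j)) ^ v.mult) /
        (FractionalIdeal.absNorm (FractionalIdeal.spanFinset (𝓞 k) Finset.univ x) : ℝ) :=
  Real.rpow_inv_natCast_pow (prod_iSup_place_div_absNorm_nonneg x) (finrank_rat_ne_zero k)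

lemma vecHeight_le_iff {x : ι → k} {c : ℝ} (hc : 0 ≤ c) :
    vecHeight k x ≤ c ↔ vecHeight k x ^ Module.finrank ℚ k ≤ c ^ Module.finrank ℚ k :=
  (pow_le_pow_iff_left₀ (vecHeight_nonneg x) hc (finrank_rat_ne_zero k)).symm

lemma one_le_vecHeight {x : ι → k} (hx : x ≠ 0) : 1 ≤ vecHeight k x := by
  obtain ⟨j, hj⟩ := Function.ne_iff.mp hx
  rw [← one_le_pow_iff_of_nonneg (vecHeight_nonneg x) (finrank_rat_ne_zero k),
    vecHeight_pow_finrank,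
    one_le_div (Rat.cast_pos.mpr (FractionalIdeal.absNorm_pos (spanFinset_ne_zero_of_ne_zero hx)))]
  calc (FractionalIdeal.absNorm (FractionalIdeal.spanFinset (𝓞 k) Finset.univ x) : ℝ)
      ≤ ((|Algebra.norm ℚ (x j)| : ℚ) : ℝ) :=
        Rat.cast_le.mpr (FractionalIdeal.absNorm_le_abs_norm_of_mem (mem_spanFinset_self x j) hj)
    _ = ∏ v : InfinitePlace k, v (x j) ^ v.mult := by
        exact_mod_cast (InfinitePlace.prod_eq_abs_norm (x j)).symm
    _ ≤ ∏ v : InfinitePlace k, (⨆ j, v (x j)) ^ v.mult :=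
        Finset.prod_le_prod (fun v _ => pow_nonneg (apply_nonneg v _) _) fun v _ =>
          pow_le_pow_left₀ (apply_nonneg v _) (le_iSup_place v x j) _

lemma vecHeight_smul {c : k} (hc : c ≠ 0) (x : ι → k) : vecHeight k (c • x) = vecHeight k x := by
  have hc' : ((|Algebra.norm ℚ c| : ℚ) : ℝ) ≠ 0 := by simpa using hc
  rw [← pow_left_inj₀ (vecHeight_nonneg _) (vecHeight_nonneg x) (finrank_rat_ne_zero k),
    vecHeight_pow_finrank, vecHeight_pow_finrank, spanFinset_smul, map_mul,
    FractionalIdeal.absNorm_span_singleton]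
  simp only [iSup_place_smul, mul_pow, Finset.prod_mul_distrib]
  rw [InfinitePlace.prod_eq_abs_norm]
  push_cast
  exact mul_div_mul_left _ _ (by exact_mod_cast hc')

lemma vecHeight_pow_finrank_le {x : ι → k} (hx : x ≠ 0) {J : FractionalIdeal (𝓞 k)⁰ k}
    (hxJ : FractionalIdeal.spanFinset (𝓞 k) Finset.univ x ≤ J) {B : InfinitePlace k → ℝ}
    (hB : ∀ v, ⨆ j, v (x j) ≤ B v) :
    vecHeight k x ^ Module.finrank ℚ k ≤
      (∏ v : InfinitePlace k, B v ^ v.mult) / (FractionalIdeal.absNorm J : ℝ) := by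
  have hx' := spanFinset_ne_zero_of_ne_zero hx
  have hJ0 : J ≠ 0 := fun h => hx' (le_antisymm (h ▸ hxJ) (FractionalIdeal.zero_le _))
  have hJ := FractionalIdeal.absNorm_le_absNorm_of_le hxJ hx'
  rw [vecHeight_pow_finrank]
  exact div_le_div₀
    (Finset.prod_nonneg fun v _ => pow_nonneg ((iSup_place_nonneg v x).trans (hB v)) _)
    (Finset.prod_le_prod (fun v _ => pow_nonneg (iSup_place_nonneg v x) _) fun v _ =>
      pow_le_pow_left₀ (iSup_place_nonneg v x) (hB v) _)
    (Rat.cast_pos.mpr (FractionalIdeal.absNorm_pos hJ0)) (Rat.cast_le.mpr hJ)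

lemma exists_vecHeight_natCast_smul_add_le [Nonempty ι] (u w : ι → k) :
    ∃ C : ℝ, ∀ n : ℕ, 1 ≤ n → (n : k) • u + w ≠ 0 →
      vecHeight k ((n : k) • u + w) ≤ C * n := by
  set A : InfinitePlace k → ℝ := fun v => (⨆ j, v (u j)) + ⨆ j, v (w j)
  set B := (∏ v : InfinitePlace k, A v ^ v.mult) /
    (FractionalIdeal.absNorm (FractionalIdeal.spanFinset (𝓞 k) Finset.univ u ⊔
      FractionalIdeal.spanFinset (𝓞 k) Finset.univ w) : ℝ)
  have hB : 0 ≤ B := div_nonneg (Finset.prod_nonneg fun v _ => pow_nonneg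
    (add_nonneg (iSup_place_nonneg v u) (iSup_place_nonneg v w)) _)
    (Rat.cast_nonneg.mpr (FractionalIdeal.absNorm_nonneg _))
  refine ⟨B ^ ((Module.finrank ℚ k : ℝ)⁻¹), fun n hn hx => ?_⟩
  have hsup : ∀ v : InfinitePlace k, ⨆ j, v (((n : k) • u + w) j) ≤ n * A v := fun v =>
    ciSup_le fun j => calc
      v (((n : k) • u + w) j) ≤ v ((n : k) * u j) + v (w j) := v.1.add_le _ _
      _ = n * v (u j) + v (w j) := by rw [map_mul, InfinitePlace.apply_natCast]
      _ ≤ n * (⨆ j, v (u j)) + ⨆ j, v (w j) :=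
        add_le_add (mul_le_mul_of_nonneg_left (le_iSup_place v u j) n.cast_nonneg)
          (le_iSup_place v w j)
      _ ≤ n * A v := by
        have : (1 : ℝ) ≤ n := by exact_mod_cast hn
        nlinarith [iSup_place_nonneg v w]
  rw [vecHeight_le_iff (by positivity)]
  calc vecHeight k ((n : k) • u + w) ^ Module.finrank ℚ k
      ≤ (∏ v : InfinitePlace k, (n * A v) ^ v.mult) /
          (FractionalIdeal.absNorm (FractionalIdeal.spanFinset (𝓞 k) Finset.univ u ⊔
            FractionalIdeal.spanFinset (𝓞 k) Finset.univ w) : ℝ) :=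
        vecHeight_pow_finrank_le hx (spanFinset_natCast_smul_add_le u w n) hsup
    _ = (B ^ ((Module.finrank ℚ k : ℝ)⁻¹) * n) ^ Module.finrank ℚ k := by
        rw [mul_pow, Real.rpow_inv_natCast_pow hB (finrank_rat_ne_zero k)]
        simp only [mul_pow, Finset.prod_mul_distrib, prod_pow_mult_const, B]
        ring

end Height

section ProjectiveSpace

variable {m : ℕ}

lemma projHeight_mk (y : Fin m → k) (hy : y ≠ 0) :
    projHeight k (Projectivization.mk k y hy) = vecHeight k y := by
  obtain ⟨c, hc⟩ := Projectivization.exists_rep_mk_eq_smul (K := k) y hy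
  rw [projHeight, hc, Units.smul_def, vecHeight_smul c.ne_zero]

lemma one_le_projHeight (P : Projectivization k (Fin m → k)) : 1 ≤ projHeight k P :=
  one_le_vecHeight (Projectivization.rep_nonzero (K := k) P)

lemma projHeight_pos (P : Projectivization k (Fin m → k)) : 0 < projHeight k P :=
  zero_lt_one.trans_le (one_le_projHeight P)

lemma projDist_nonneg (S T : Projectivization k (Fin m → k)) : 0 ≤ projDist k S T :=
  Finset.sum_nonneg fun v _ => div_nonneg (Real.iSup_nonneg fun _ => apply_nonneg v _)
    (mul_nonneg (iSup_place_nonneg v _) (iSup_place_nonneg v _))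

lemma projDist_self (S : Projectivization k (Fin m → k)) : projDist k S S = 0 := by
  simp [projDist, mul_comm]

lemma projDist_mk (S : Projectivization k (Fin m → k)) (y : Fin m → k) (hy : y ≠ 0) :
    projDist k S (Projectivization.mk k y hy) = ∑ v : InfinitePlace k,
      (⨆ p : Fin m × Fin m, v (S.rep p.1 * y p.2 - S.rep p.2 * y p.1)) /
        ((⨆ j, v (S.rep j)) * ⨆ j, v (y j)) := by
  obtain ⟨c, hc⟩ := Projectivization.exists_rep_mk_eq_smul (K := k) y hy
  refine Finset.sum_congr rfl fun v _ => ?_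
  have hminors : ⨆ p : Fin m × Fin m, v (S.rep p.1 * (c • y) p.2 - S.rep p.2 * (c • y) p.1) =
      v c * ⨆ p : Fin m × Fin m, v (S.rep p.1 * y p.2 - S.rep p.2 * y p.1) := by
    rw [← iSup_place_smul]
    congr 1; ext p; congr 1
    simp only [Units.smul_def, Pi.smul_apply, smul_eq_mul]
    ring
  have hv : v c ≠ 0 := (InfinitePlace.pos_iff.mpr c.ne_zero).ne'
  rw [hc, hminors, Units.smul_def, iSup_place_smul, mul_left_comm, mul_div_mul_left _ _ hv]

end ProjectiveSpace

lemma projDist_eq_sum (S T : Projectivization k (Fin 2 → k)) :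
    projDist k S T = ∑ v : InfinitePlace k,
      v (S.rep 0 * T.rep 1 - S.rep 1 * T.rep 0) / ((⨆ j, v (S.rep j)) * ⨆ j, v (T.rep j)) := by
  simp only [projDist, iSup_place_minors_fin_two]

lemma inv_projHeight_mul_le_projDist {S T : Projectivization k (Fin 2 → k)} (h : S ≠ T) :
    (projHeight k S * projHeight k T)⁻¹ ≤ projDist k S T := by
  set x := S.rep
  set y := T.rep
  have hnorm := absNorm_spanFinset_mul_le_abs_norm (mul_sub_mul_ne_zero_of_ne h)
  rw [← pow_le_pow_iff_left₀ (by positivity [projHeight_pos S, projHeight_pos T])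
    (projDist_nonneg S T) (finrank_rat_ne_zero k), inv_pow, mul_pow, projHeight, projHeight,
    vecHeight_pow_finrank, vecHeight_pow_finrank, projDist_eq_sum]
  refine le_trans ?_ (prod_pow_mult_le_sum_pow fun v => div_nonneg (apply_nonneg v _)
    (mul_nonneg (iSup_place_nonneg v x) (iSup_place_nonneg v y)))
  rw [div_mul_div_comm, inv_div, ← Finset.prod_mul_distrib]
  calc _ ≤ ((|Algebra.norm ℚ (x 0 * y 1 - x 1 * y 0)| : ℚ) : ℝ) /
        ∏ v : InfinitePlace k, (⨆ j, v (x j)) ^ v.mult * (⨆ j, v (y j)) ^ v.mult :=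
        div_le_div_of_nonneg_right hnorm (Finset.prod_nonneg fun v _ => mul_nonneg
          (pow_nonneg (iSup_place_nonneg v x) _) (pow_nonneg (iSup_place_nonneg v y) _))
    _ = _ := by
        rw [← InfinitePlace.prod_eq_abs_norm, ← Finset.prod_div_distrib]
        simp only [div_pow, mul_pow]
        rfl

lemma projDist_mk_natCast_smul_add_le (R : Projectivization k (Fin 2 → k)) {w : Fin 2 → k}
    {j : Fin 2} (hRj : R.rep j ≠ 0) (hwj : w j = 0) {n : ℕ} (hn : 1 ≤ n)
    (hx : (n : k) • R.rep + w ≠ 0) :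
    projDist k R (Projectivization.mk k ((n : k) • R.rep + w) hx) ≤
      (∑ v : InfinitePlace k, v (R.rep 0 * w 1 - R.rep 1 * w 0) /
        ((⨆ i, v (R.rep i)) * v (R.rep j))) / n := by
  rw [projDist_mk, Finset.sum_div]
  refine Finset.sum_le_sum fun v _ => ?_
  rw [iSup_place_minors_fin_two, minor_natCast_smul_add]
  have hR := iSup_place_pos v (Projectivization.rep_nonzero R)
  have hxj : n * v (R.rep j) ≤ ⨆ i, v (((n : k) • R.rep + w) i) := by
    simpa only [Pi.add_apply, Pi.smul_apply, smul_eq_mul, hwj, add_zero, map_mul,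
      NumberField.InfinitePlace.apply_natCast] using le_iSup_place v ((n : k) • R.rep + w) j
  calc _ ≤ v (R.rep 0 * w 1 - R.rep 1 * w 0) / ((⨆ i, v (R.rep i)) * (n * v (R.rep j))) :=
        div_le_div_of_nonneg_left (apply_nonneg v _)
          (mul_pos hR (mul_pos (by exact_mod_cast hn) (InfinitePlace.pos_iff.mpr hRj)))
          (mul_le_mul_of_nonneg_left hxj hR.le)
    _ = _ := by ring

lemma exists_seq_projDist_mul_projHeight_bddAbove (R : Projectivization k (Fin 2 → k)) :
    ∃ Z : ℕ → Projectivization k (Fin 2 → k), (∀ i, Z i ≠ R) ∧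
      Tendsto (fun i => projDist k R (Z i)) atTop (𝓝 0) ∧
      ∃ C : ℝ, ∀ i, projDist k R (Z i) * projHeight k (Z i) ≤ C := by
  obtain ⟨w, j, hRj, hwj, ht⟩ := exists_mul_sub_mul_ne_zero (Projectivization.rep_nonzero R)
  set x : ℕ → Fin 2 → k := fun n => ((n + 1 : ℕ) : k) • R.rep + w
  have hx : ∀ n, x n ≠ 0 := fun n h => ht <| by
    rw [← minor_natCast_smul_add R.rep w (n + 1), show ((n + 1 : ℕ) : k) • R.rep + w = 0 from h]
    simp
  set Z := fun n => Projectivization.mk k (x n) (hx n)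
  set D := ∑ v : InfinitePlace k, v (R.rep 0 * w 1 - R.rep 1 * w 0) /
    ((⨆ i, v (R.rep i)) * v (R.rep j))
  have hdist (n : ℕ) : projDist k R (Z n) ≤ D / (n + 1 : ℕ) :=
    projDist_mk_natCast_smul_add_le R hRj hwj n.succ_pos (hx n)
  have hpos (n : ℕ) : 0 < projDist k R (Z n) := by
    rw [projDist_mk]
    refine Finset.sum_pos (fun v _ => ?_) Finset.univ_nonempty
    rw [iSup_place_minors_fin_two, minor_natCast_smul_add]
    exact div_pos (InfinitePlace.pos_iff.mpr ht)
      (mul_pos (iSup_place_pos v (Projectivization.rep_nonzero R)) (iSup_place_pos v (hx n)))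
  obtain ⟨C, hC⟩ := exists_vecHeight_natCast_smul_add_le R.rep w
  refine ⟨Z, fun n h => (hpos n).ne' (h ▸ projDist_self R), ?_, D * C, fun n => ?_⟩
  · exact squeeze_zero (fun n => projDist_nonneg R (Z n)) hdist
      ((tendsto_const_div_atTop_nhds_zero_nat D).comp (tendsto_add_atTop_nat 1))
  · calc projDist k R (Z n) * projHeight k (Z n)
        ≤ D / (n + 1 : ℕ) * (C * (n + 1 : ℕ)) := by
          refine mul_le_mul (hdist n) ?_ (projHeight_pos _).le
            ((projDist_nonneg R (Z n)).trans (hdist n))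
          rw [projHeight_mk]
          exact hC (n + 1) n.succ_pos (hx n)
      _ = D * C := by field_simp

lemma le_of_tendsto_zero_of_rpow_mul_bounds {d h : ℕ → ℝ} {m β c C : ℝ} (hc : 0 < c)
    (hd : ∀ i, 0 < d i) (hlim : Tendsto d atTop (𝓝 0)) (hlow : ∀ i, c ≤ d i ^ m * h i)
    (hup : ∀ i, d i ^ β * h i ≤ C) : m ≤ β := by
  by_contra! hβm
  have hlim' : Tendsto (fun i => d i ^ (m - β) * C) atTop (𝓝 0) := by
    simpa [Real.zero_rpow (sub_pos.2 hβm).ne'] using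
      (hlim.rpow_const (Or.inr (sub_pos.2 hβm).le)).mul_const C
  obtain ⟨i, hi⟩ := (hlim'.eventually_lt_const hc).exists
  refine hi.not_ge ?_
  calc c ≤ d i ^ m * h i := hlow i
    _ = d i ^ (m - β) * (d i ^ β * h i) := by
        rw [← mul_assoc, ← Real.rpow_add (hd i), sub_add_cancel]
    _ ≤ d i ^ (m - β) * C := mul_le_mul_of_nonneg_left (hup i) (Real.rpow_nonneg (hd i).le _)

section ApproximationConstant

def HasLiouvilleBound {X : Type*} (d : X → X → ℝ) (h : X → ℝ) (P : X) (m : ℝ) : Prop :=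
  ∃ c > 0, ∀ Z, Z ≠ P → 0 < d P Z ∧ c ≤ d P Z ^ m * h Z

variable {X : Type*} {d : X → X → ℝ} {h : X → ℝ} {P : X} {m : ℝ}

lemma HasLiouvilleBound.le_of_approxSeq (hL : HasLiouvilleBound d h P m) {Q : ℕ → X}
    (hQ : ApproxSeq d P Q) {β C : ℝ} (hup : ∀ i, d P (Q i) ^ β * h (Q i) ≤ C) : m ≤ β := by
  obtain ⟨c, hc, hcZ⟩ := hL
  exact le_of_tendsto_zero_of_rpow_mul_bounds hc (fun i => (hcZ _ (hQ.1 i)).1) hQ.2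
    (fun i => (hcZ _ (hQ.1 i)).2) hup

lemma HasLiouvilleBound.isApproxConst (hL : HasLiouvilleBound d h P m) (hm : 0 ≤ m)
    {Q : ℕ → X} (hQ : ApproxSeq d P Q) (hbdd : ∃ C, ∀ i, d P (Q i) ^ m * h (Q i) ≤ C) :
    IsApproxConst d h P Q m :=
  ⟨⟨hm, hbdd⟩, fun _ ⟨_, _, hC⟩ => hL.le_of_approxSeq hQ hC⟩

lemma HasLiouvilleBound.isPointApproxConst (hL : HasLiouvilleBound d h P m) (hm : 0 ≤ m)
    {S : Set X} {Q : ℕ → X} (hQS : ∀ i, Q i ∈ S) (hQ : ApproxSeq d P Q)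
    (hbdd : ∃ C, ∀ i, d P (Q i) ^ m * h (Q i) ≤ C) : IsPointApproxConst d h S P m :=
  ⟨⟨Q, hQS, hQ, hL.isApproxConst hm hQ hbdd⟩,
    fun _ ⟨_, _, hQ', ⟨_, _, hC⟩, _⟩ => hL.le_of_approxSeq hQ' hC⟩

lemma HasLiouvilleBound.isBestApproxSeq (hL : HasLiouvilleBound d h P m) (hm : 0 ≤ m)
    {S : Set X} {Q : ℕ → X} (hQS : ∀ i, Q i ∈ S) (hQ : ApproxSeq d P Q)
    (hbdd : ∃ C, ∀ i, d P (Q i) ^ m * h (Q i) ≤ C) : IsBestApproxSeq d h S P Q :=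
  ⟨hQS, hQ, m, hL.isApproxConst hm hQ hbdd, hL.isPointApproxConst hm hQS hQ hbdd⟩

end ApproximationConstant

lemma p1p1Dist_swap (x y : Projectivization k (Fin 2 → k) × Projectivization k (Fin 2 → k)) :
    p1p1Dist k x.swap y.swap = p1p1Dist k x y :=
  max_comm _ _

lemma p1p1Height_swap (a b : ℕ)
    (x : Projectivization k (Fin 2 → k) × Projectivization k (Fin 2 → k)) :
    p1p1Height k a b x.swap = p1p1Height k b a x :=
  mul_comm _ _

lemma p1p1Dist_pos_and_inv_pow_le_of_fst_ne
    {P Z : Projectivization k (Fin 2 → k) × Projectivization k (Fin 2 → k)} (h1 : Z.1 ≠ P.1)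
    {a b n : ℕ} (hn : n ≤ a) :
    0 < p1p1Dist k P Z ∧
      ((projHeight k P.1 * projHeight k P.2)⁻¹) ^ n ≤ p1p1Dist k P Z ^ n * p1p1Height k a b Z := by
  have hHP1 := projHeight_pos P.1
  have hHZ1 := projHeight_pos Z.1
  have hL : (projHeight k P.1 * projHeight k Z.1)⁻¹ ≤ p1p1Dist k P Z :=
    (inv_projHeight_mul_le_projDist (Ne.symm h1)).trans (le_max_left _ _)
  have hpos : 0 < p1p1Dist k P Z := lt_of_lt_of_le (by positivity) hL
  refine ⟨hpos, ?_⟩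
  have hbase : (projHeight k P.1 * projHeight k P.2)⁻¹ ≤ p1p1Dist k P Z * projHeight k Z.1 :=
    calc (projHeight k P.1 * projHeight k P.2)⁻¹ ≤ (projHeight k P.1)⁻¹ := by
          rw [mul_inv]
          exact mul_le_of_le_one_right (inv_nonneg.mpr hHP1.le)
            (inv_le_one_of_one_le₀ (one_le_projHeight _))
      _ = (projHeight k P.1 * projHeight k Z.1)⁻¹ * projHeight k Z.1 := by field_simp
      _ ≤ p1p1Dist k P Z * projHeight k Z.1 := mul_le_mul_of_nonneg_right hL hHZ1.le
  calc ((projHeight k P.1 * projHeight k P.2)⁻¹) ^ n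
      ≤ (p1p1Dist k P Z * projHeight k Z.1) ^ n := pow_le_pow_left₀
        (inv_nonneg.mpr (mul_pos hHP1 (projHeight_pos P.2)).le) hbase n
    _ = p1p1Dist k P Z ^ n * projHeight k Z.1 ^ n := mul_pow _ _ _
    _ ≤ p1p1Dist k P Z ^ n * p1p1Height k a b Z := by
        refine mul_le_mul_of_nonneg_left ?_ (pow_nonneg hpos.le n)
        exact (pow_le_pow_right₀ (one_le_projHeight _) hn).trans
          (le_mul_of_one_le_right (pow_nonneg hHZ1.le a) (one_le_pow₀ (one_le_projHeight _)))

lemma hasLiouvilleBound_p1p1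
    (P : Projectivization k (Fin 2 → k) × Projectivization k (Fin 2 → k)) (a b : ℕ) :
    HasLiouvilleBound (p1p1Dist k) (p1p1Height k a b) P (min a b : ℕ) := by
  refine ⟨((projHeight k P.1 * projHeight k P.2)⁻¹) ^ min a b,
    by have := projHeight_pos P.1; have := projHeight_pos P.2; positivity, fun Z hZ => ?_⟩
  rw [Real.rpow_natCast]
  by_cases h1 : Z.1 = P.1
  · have h2 : Z.2 ≠ P.2 := fun h2 => hZ (Prod.ext h1 h2)
    have := p1p1Dist_pos_and_inv_pow_le_of_fst_ne (P := P.swap) (Z := Z.swap) h2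
      (b := a) (min_le_right a b)
    rwa [p1p1Dist_swap, p1p1Height_swap, Prod.fst_swap, Prod.snd_swap,
      mul_comm (projHeight k P.2)] at this
  · exact p1p1Dist_pos_and_inv_pow_le_of_fst_ne h1 (min_le_left a b)

lemma exists_approxSeq_fst_eq
    (P : Projectivization k (Fin 2 → k) × Projectivization k (Fin 2 → k)) (a b : ℕ) :
    ∃ Q : ℕ → Projectivization k (Fin 2 → k) × Projectivization k (Fin 2 → k),
      (∀ i, (Q i).1 = P.1) ∧ ApproxSeq (p1p1Dist k) P Q ∧
      ∃ C, ∀ i, p1p1Dist k P (Q i) ^ (b : ℝ) * p1p1Height k a b (Q i) ≤ C := by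
  obtain ⟨Z, hZ, hlim, C, hC⟩ := exists_seq_projDist_mul_projHeight_bddAbove P.2
  have hdist : ∀ i, p1p1Dist k P (P.1, Z i) = projDist k P.2 (Z i) := fun i =>
    (congrArg₂ max (projDist_self P.1) rfl).trans (max_eq_right (projDist_nonneg _ _))
  refine ⟨fun i => (P.1, Z i), fun i => rfl,
    ⟨fun i h => hZ i (congrArg Prod.snd h), by simpa only [hdist] using hlim⟩,
    projHeight k P.1 ^ a * C ^ b, fun i => ?_⟩
  rw [hdist, Real.rpow_natCast, p1p1Height, mul_left_comm, ← mul_pow]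
  exact mul_le_mul_of_nonneg_left
    (pow_le_pow_left₀ (mul_nonneg (projDist_nonneg _ _) (projHeight_pos _).le) (hC i) b)
    (pow_nonneg (projHeight_pos _).le a)

lemma exists_approxSeq_snd_eq
    (P : Projectivization k (Fin 2 → k) × Projectivization k (Fin 2 → k)) (a b : ℕ) :
    ∃ Q : ℕ → Projectivization k (Fin 2 → k) × Projectivization k (Fin 2 → k),
      (∀ i, (Q i).2 = P.2) ∧ ApproxSeq (p1p1Dist k) P Q ∧
      ∃ C, ∀ i, p1p1Dist k P (Q i) ^ (a : ℝ) * p1p1Height k a b (Q i) ≤ C := by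
  obtain ⟨Q, hQ1, ⟨hne, hlim⟩, C, hC⟩ := exists_approxSeq_fst_eq P.swap b a
  have hdist : ∀ i, p1p1Dist k P (Q i).swap = p1p1Dist k P.swap (Q i) := fun i => by
    rw [← p1p1Dist_swap, Prod.swap_swap]
  refine ⟨fun i => (Q i).swap, hQ1, ⟨fun i h => hne i (by rw [← h, Prod.swap_swap]), ?_⟩,
    C, fun i => ?_⟩
  · simpa only [hdist] using hlim
  · rw [hdist, p1p1Height_swap]
    exact hC i

variable (k)

theorem statement9
    (P : Projectivization k (Fin 2 → k) × Projectivization k (Fin 2 → k))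
    (a b : ℕ) :
    IsPointApproxConst (p1p1Dist k) (p1p1Height k a b) Set.univ P (min (a : ℝ) (b : ℝ)) ∧
    (b ≤ a → ∃ Q : ℕ → Projectivization k (Fin 2 → k) × Projectivization k (Fin 2 → k),
      IsBestApproxSeq (p1p1Dist k) (p1p1Height k a b) Set.univ P Q ∧ ∀ i, (Q i).1 = P.1) ∧
    (a ≤ b → ∃ Q : ℕ → Projectivization k (Fin 2 → k) × Projectivization k (Fin 2 → k),
      IsBestApproxSeq (p1p1Dist k) (p1p1Height k a b) Set.univ P Q ∧ ∀ i, (Q i).2 = P.2) := by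
  have hL := hasLiouvilleBound_p1p1 P a b
  rw [Nat.cast_min] at hL
  have hm : (0 : ℝ) ≤ min (a : ℝ) (b : ℝ) := by positivity
  obtain ⟨Q₁, hQ₁P, hQ₁, C₁, hC₁⟩ := exists_approxSeq_fst_eq P a b
  obtain ⟨Q₂, hQ₂P, hQ₂, C₂, hC₂⟩ := exists_approxSeq_snd_eq P a b
  have hbdd₁ (hba : b ≤ a) :
      ∃ C, ∀ i, p1p1Dist k P (Q₁ i) ^ min (a : ℝ) b * p1p1Height k a b (Q₁ i) ≤ C :=
    ⟨C₁, by rwa [min_eq_right (Nat.cast_le.mpr hba)]⟩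
  have hbdd₂ (hab : a ≤ b) :
      ∃ C, ∀ i, p1p1Dist k P (Q₂ i) ^ min (a : ℝ) b * p1p1Height k a b (Q₂ i) ≤ C :=
    ⟨C₂, by rwa [min_eq_left (Nat.cast_le.mpr hab)]⟩
  refine ⟨?_, fun hba => ⟨Q₁, hL.isBestApproxSeq hm (fun _ => trivial) hQ₁ (hbdd₁ hba), hQ₁P⟩,
    fun hab => ⟨Q₂, hL.isBestApproxSeq hm (fun _ => trivial) hQ₂ (hbdd₂ hab), hQ₂P⟩⟩
  rcases le_total b a with hba | hab
  · exact hL.isPointApproxConst hm (fun _ => trivial) hQ₁ (hbdd₁ hba)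
  · exact hL.isPointApproxConst hm (fun _ => trivial) hQ₂ (hbdd₂ hab)

end
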